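/- arXiv:2505.06156 — 3 statements merged into one kernel-verified Lean document; each statement's English description precedes it below -/
import Mathlib

section
/- Let Q be a real 2×2 orthogonal matrix, M1 = [[1,0],[0,0]], M2 = [[0,0],[0,1]] and ε = [[0,1],[−1,0]]. Then Q maps the set {M1, M2} to itself under conjugation and satisfies Q ε Qᵀ = ε if and only if Q ∈ {I, R_{π/2}, −I, R_{π/2}ᵀ}, i.e. Q is a rotation of order dividing 4. In other words, the structural tensor set {M1, M2, ε} characterizes the 2D point group C4. -/
open Matrix

/-- `M1 = e1 ⊗ e1 = [[1,0],[0,0]]`. -/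
noncomputable def M1 : Matrix (Fin 2) (Fin 2) ℝ := !![1, 0; 0, 0]

/-- `M2 = e2 ⊗ e2 = [[0,0],[0,1]]`. -/
noncomputable def M2 : Matrix (Fin 2) (Fin 2) ℝ := !![0, 0; 0, 1]

/-- The 2D permutation tensor ε = [[0,1],[-1,0]]. -/
noncomputable def eps : Matrix (Fin 2) (Fin 2) ℝ := !![0, 1; -1, 0]

/-- The rotation `R_{π/2} = [[0,-1],[1,0]]`. -/
noncomputable def rotHalfPi : Matrix (Fin 2) (Fin 2) ℝ := !![0, -1; 1, 0]

lemma rot_transpose : rotHalfPiᵀ = !![0, 1; -1, 0] := by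
  ext i j; fin_cases i <;> fin_cases j <;> simp [rotHalfPi]

/-- For `Q ∈ O(2)`, conjugation by `Q` maps `{M1, M2}` to itself and fixes ε iff
`Q ∈ {I, R_{π/2}, -I, R_{π/2}ᵀ}`: the structural tensor set `{M1, M2, ε}`
characterizes the 2D point group `C4`. -/
theorem stmt_4 (Q : Matrix (Fin 2) (Fin 2) ℝ) (hQ : Q * Qᵀ = 1) :
    (((Q * M1 * Qᵀ = M1 ∧ Q * M2 * Qᵀ = M2) ∨
        (Q * M1 * Qᵀ = M2 ∧ Q * M2 * Qᵀ = M1)) ∧ Q * eps * Qᵀ = eps) ↔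
    (Q = 1 ∨ Q = rotHalfPi ∨ Q = -1 ∨ Q = rotHalfPiᵀ) := by
  have h00 := congrFun (congrFun hQ 0) 0
  have h01 := congrFun (congrFun hQ 0) 1
  have h11 := congrFun (congrFun hQ 1) 1
  simp [Matrix.mul_apply, Fin.sum_univ_two, Matrix.one_apply] at h00 h01 h11
  constructor
  · rintro ⟨h, he⟩
    have e01 := congrFun (congrFun he 0) 1
    simp [Matrix.mul_apply, Fin.sum_univ_two, eps] at e01
    rcases h with ⟨h1, h2⟩ | ⟨h1, h2⟩
    · have a00 := congrFun (congrFun h1 0) 0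
      have a10 := congrFun (congrFun h1 1) 1
      simp [Matrix.mul_apply, Fin.sum_univ_two, M1] at a00 a10
      have hc : Q 1 0 = 0 := a10
      have hb : Q 0 1 = 0 := by nlinarith [sq_nonneg (Q 0 1)]
      rcases mul_self_eq_one_iff.mp a00 with ha | ha
      · left
        have hd : Q 1 1 = 1 := by nlinarith
        ext i j; fin_cases i <;> fin_cases j <;>
          simp [ha, hb, hc, hd, Matrix.one_apply]
      · right; right; left
        have hd : Q 1 1 = -1 := by nlinarith
        ext i j; fin_cases i <;> fin_cases j <;>
          simp [ha, hb, hc, hd, Matrix.one_apply]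
    · have a00 := congrFun (congrFun h1 0) 0
      have a10 := congrFun (congrFun h1 1) 1
      simp [Matrix.mul_apply, Fin.sum_univ_two, M1, M2] at a00 a10
      have ha : Q 0 0 = 0 := a00
      have hd : Q 1 1 = 0 := by nlinarith [sq_nonneg (Q 1 1)]
      have hb2 : Q 0 1 * Q 0 1 = 1 := by nlinarith
      rcases mul_self_eq_one_iff.mp hb2 with hb | hb
      · right; right; right
        have hc : Q 1 0 = -1 := by nlinarith
        rw [rot_transpose]
        ext i j; fin_cases i <;> fin_cases j <;>
          simp [ha, hb, hc, hd]
      · right; left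
        have hc : Q 1 0 = 1 := by nlinarith
        ext i j; fin_cases i <;> fin_cases j <;>
          simp [ha, hb, hc, hd, rotHalfPi]
  · clear h00 h01 h11 hQ
    rintro (rfl | rfl | rfl | rfl)
    · exact ⟨Or.inl ⟨by simp, by simp⟩, by simp⟩
    · refine ⟨Or.inr ⟨?_, ?_⟩, ?_⟩ <;>
        rw [rot_transpose] <;> norm_num [M1, M2, eps, rotHalfPi, Matrix.mul_fin_two] <;> (ext i; fin_cases i <;> simp)
    · refine ⟨Or.inl ⟨?_, ?_⟩, ?_⟩ <;> simp
    · rw [transpose_transpose]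
      refine ⟨Or.inr ⟨?_, ?_⟩, ?_⟩ <;>
        rw [rot_transpose] <;> norm_num [M1, M2, eps, rotHalfPi, Matrix.mul_fin_two] <;> (ext i; fin_cases i <;> simp)
end

section
/- Let M1 = [[1,0],[0,0]], M2 = [[0,0],[0,1]], ε = [[0,1],[−1,0]], and let G = {I, R_{π/2}, −I, R_{π/2}ᵀ} be the cyclic group of rotations by multiples of π/2 (the point group C4), where R_{π/2} = [[0,−1],[1,0]]. For real symmetric 2×2 matrices C and D, there exists Q ∈ G with D = Q C Qᵀ if and only if either (tr(C M1), tr(C M2), tr(C M1 ε)) = (tr(D M1), tr(D M2), tr(D M1 ε)) or (tr(C M1), tr(C M2), tr(C M1 ε)) = (tr(D M2), tr(D M1), −tr(D M1 ε)). (Completeness of the functional basis {tr(C M1), tr(C M2), tr(C M1 ε)} with the symmetry constraint for C4 scalar functions.) -/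
open Matrix

/-- For real symmetric 2×2 matrices `C`, `D`: `D = Q C Qᵀ` for some `Q` in the
point group `C4 = {I, R_{π/2}, -I, R_{π/2}ᵀ}` iff the triple
`(tr(C M1), tr(C M2), tr(C M1 ε))` equals `(tr(D M1), tr(D M2), tr(D M1 ε))` or
`(tr(D M2), tr(D M1), -tr(D M1 ε))`. (Completeness of the functional basis
`{tr(C M1), tr(C M2), tr(C M1 ε)}` with the symmetry constraint for `C4` scalar
functions.) -/
theorem stmt_14 (C D : Matrix (Fin 2) (Fin 2) ℝ) (hC : Cᵀ = C) (hD : Dᵀ = D) :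
    (∃ Q ∈ ({1, rotHalfPi, -1, rotHalfPiᵀ} : Set (Matrix (Fin 2) (Fin 2) ℝ)),
      D = Q * C * Qᵀ) ↔
    (((C * M1).trace = (D * M1).trace ∧ (C * M2).trace = (D * M2).trace ∧
        (C * M1 * eps).trace = (D * M1 * eps).trace) ∨
      ((C * M1).trace = (D * M2).trace ∧ (C * M2).trace = (D * M1).trace ∧
        (C * M1 * eps).trace = -(D * M1 * eps).trace)) := by
  have hc : C 1 0 = C 0 1 := by
    conv_lhs => rw [← hC]
    simp [Matrix.transpose_apply]
  have hd : D 1 0 = D 0 1 := by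
    conv_lhs => rw [← hD]
    simp [Matrix.transpose_apply]
  obtain ⟨a, b, c, rfl⟩ : ∃ a b c, C = !![a, b; b, c] :=
    ⟨C 0 0, C 0 1, C 1 1, by conv_lhs => rw [Matrix.eta_fin_two C, hc]⟩
  obtain ⟨d, e, f, rfl⟩ : ∃ d e f, D = !![d, e; e, f] :=
    ⟨D 0 0, D 0 1, D 1 1, by conv_lhs => rw [Matrix.eta_fin_two D, hd]⟩
  have hro : rotHalfPi = !![0, -1; 1, 0] := rfl
  have hrt : (!![0, -1; 1, 0] : Matrix (Fin 2) (Fin 2) ℝ)ᵀ = !![0, 1; -1, 0] := by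
    ext i j; fin_cases i <;> fin_cases j <;> simp
  have hrt2 : (!![0, 1; -1, 0] : Matrix (Fin 2) (Fin 2) ℝ)ᵀ = !![0, -1; 1, 0] := by
    ext i j; fin_cases i <;> fin_cases j <;> simp
  constructor
  · rintro ⟨Q, hQ, hDQ⟩
    simp only [Set.mem_insert_iff, Set.mem_singleton_iff] at hQ
    rcases hQ with rfl | rfl | rfl | rfl <;> rw [hDQ] <;> [left; right; left; right] <;>
      refine ⟨?_, ?_, ?_⟩ <;>
      simp only [Matrix.transpose_one, Matrix.transpose_neg, Matrix.transpose_transpose,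
        hro, hrt, hrt2, neg_mul, mul_neg, neg_neg, one_mul, mul_one] <;>
      simp [M1, M2, eps, Matrix.mul_fin_two, Matrix.trace_fin_two]
  · rintro (⟨h1, h2, h3⟩ | ⟨h1, h2, h3⟩) <;>
      simp [M1, M2, eps, Matrix.mul_fin_two, Matrix.trace_fin_two] at h1 h2 h3
    · refine ⟨1, by simp, ?_⟩
      rw [Matrix.transpose_one, one_mul, mul_one]
      ext i j
      fin_cases i <;> fin_cases j <;> simp <;> linarith
    · refine ⟨rotHalfPi, by simp, ?_⟩
      rw [hro, hrt]
      simp only [Matrix.mul_fin_two]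
      ext i j
      fin_cases i <;> fin_cases j <;> simp <;> linarith
end

section
/- Let v1 = (0,1), v2 = (√3/2, −1/2), v3 = (−√3/2, −1/2) in ℝ², and let G be the subgroup of O(2) generated by the rotation R_{2π/3} = [[−1/2, −√3/2],[√3/2, −1/2]] and the reflection σ1 = [[−1,0],[0,1]] (the dihedral group of order 6, the point group C3v). For real symmetric 2×2 matrices C and D, there exists Q ∈ G with D = Q C Qᵀ if and only if there is a permutation σ of {1,2,3} such that vᵢ · D vᵢ = v_{σ(i)} · C v_{σ(i)} for i = 1, 2, 3. (Completeness of the functional basis {v1·Cv1, v2·Cv2, v3·Cv3} with the full permutation constraints for C3v scalar functions.) -/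
open Matrix

/-- The structural vectors `v1 = (0,1)`, `v2 = (√3/2, -1/2)`, `v3 = (-√3/2, -1/2)`
as a family indexed by `Fin 3`. -/
noncomputable def v : Fin 3 → Fin 2 → ℝ :=
  ![![0, 1], ![Real.sqrt 3 / 2, -(1 / 2)], ![-(Real.sqrt 3 / 2), -(1 / 2)]]

/-- The rotation `R_{2π/3} = [[-1/2, -√3/2],[√3/2, -1/2]]` as an element of `O(2)`. -/
noncomputable def rot2PiOver3 : Matrix.orthogonalGroup (Fin 2) ℝ :=
  ⟨!![-(1 / 2), -(Real.sqrt 3 / 2); Real.sqrt 3 / 2, -(1 / 2)], by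
    have h3 : Real.sqrt 3 * Real.sqrt 3 = 3 := Real.mul_self_sqrt (by norm_num)
    rw [Matrix.mem_orthogonalGroup_iff]
    ext i j
    fin_cases i <;> fin_cases j <;>
      simp [Matrix.mul_apply, Fin.sum_univ_two, Matrix.one_apply] <;> nlinarith [h3]⟩

/-- The reflection `σ1 = [[-1,0],[0,1]]` as an element of `O(2)`. -/
noncomputable def sigma1 : Matrix.orthogonalGroup (Fin 2) ℝ :=
  ⟨!![-1, 0; 0, 1], by
    rw [Matrix.mem_orthogonalGroup_iff]
    ext i j
    fin_cases i <;> fin_cases j <;>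
      simp [Matrix.mul_apply, Fin.sum_univ_two, Matrix.one_apply]⟩

/-- The point group `C3v`: the subgroup of `O(2)` generated by `R_{2π/3}` and `σ1`
(the dihedral group of order 6). -/
noncomputable def C3v : Subgroup (Matrix.orthogonalGroup (Fin 2) ℝ) :=
  Subgroup.closure {rot2PiOver3, sigma1}

/-- A group element `Q` realizes a permutation `σ` if `Qᵀ` sends each `v i` to `± v (σ i)`. -/
def Realizes (Q : Matrix.orthogonalGroup (Fin 2) ℝ) (σ : Equiv.Perm (Fin 3)) : Prop :=
  ∀ i, (Q : Matrix (Fin 2) (Fin 2) ℝ)ᵀ.mulVec (v i) = v (σ i) ∨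
    (Q : Matrix (Fin 2) (Fin 2) ℝ)ᵀ.mulVec (v i) = -v (σ i)

lemma coe_inv_orth (Q : Matrix.orthogonalGroup (Fin 2) ℝ) :
    ((Q⁻¹ : Matrix.orthogonalGroup (Fin 2) ℝ) : Matrix (Fin 2) (Fin 2) ℝ) = (↑Q)ᵀ := by
  rw [Matrix.UnitaryGroup.inv_apply]
  ext i j; simp [Matrix.star_apply]

lemma realizes_one : Realizes 1 1 := by
  intro i
  left
  simp

lemma realizes_mul {Q1 Q2 : Matrix.orthogonalGroup (Fin 2) ℝ} {σ1 σ2 : Equiv.Perm (Fin 3)}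
    (h1 : Realizes Q1 σ1) (h2 : Realizes Q2 σ2) : Realizes (Q1 * Q2) (σ2 * σ1) := by
  intro i
  have hc : ((Q1 * Q2 : Matrix.orthogonalGroup (Fin 2) ℝ) : Matrix (Fin 2) (Fin 2) ℝ)ᵀ
      = (Q2 : Matrix (Fin 2) (Fin 2) ℝ)ᵀ * (Q1 : Matrix (Fin 2) (Fin 2) ℝ)ᵀ := by
    push_cast
    rw [Matrix.transpose_mul]
  rw [hc, ← Matrix.mulVec_mulVec]
  rcases h1 i with h | h <;> rw [h] <;> [skip; rw [Matrix.mulVec_neg]] <;>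
    rcases h2 (σ1 i) with h' | h' <;> simp [h', Equiv.Perm.mul_apply]

lemma realizes_inv {Q : Matrix.orthogonalGroup (Fin 2) ℝ} {σ : Equiv.Perm (Fin 3)}
    (h : Realizes Q σ) : Realizes Q⁻¹ σ⁻¹ := by
  intro j
  have hQQ : (Q : Matrix (Fin 2) (Fin 2) ℝ) * (Q : Matrix (Fin 2) (Fin 2) ℝ)ᵀ = 1 :=
    (Matrix.mem_orthogonalGroup_iff _ _).mp Q.2
  have key : ∀ w, (Q : Matrix (Fin 2) (Fin 2) ℝ).mulVec
      ((Q : Matrix (Fin 2) (Fin 2) ℝ)ᵀ.mulVec w) = w := by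
    intro w; rw [Matrix.mulVec_mulVec, hQQ, Matrix.one_mulVec]
  rw [coe_inv_orth, Matrix.transpose_transpose]
  rcases h (σ⁻¹ j) with h' | h'
  · left
    have := congrArg (Q : Matrix (Fin 2) (Fin 2) ℝ).mulVec h'
    rw [key] at this
    rw [show σ (σ⁻¹ j) = j from σ.apply_symm_apply j] at this
    exact this.symm ▸ rfl
  · right
    have := congrArg (Q : Matrix (Fin 2) (Fin 2) ℝ).mulVec h'
    rw [key] at this
    rw [show σ (σ⁻¹ j) = j from σ.apply_symm_apply j, Matrix.mulVec_neg] at this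
    rw [this, neg_neg]

lemma realizes_rot : Realizes rot2PiOver3 (finRotate 3) := by
  have h3 : Real.sqrt 3 * Real.sqrt 3 = 3 := Real.mul_self_sqrt (by norm_num)
  intro i
  left
  fin_cases i <;>
  · funext j
    fin_cases j <;>
      simp [rot2PiOver3, v, Matrix.mulVec, dotProduct, Fin.sum_univ_two, Matrix.vecHead, Matrix.vecTail,
        show (finRotate 3) (0 : Fin 3) = 1 by decide,
        show (finRotate 3) (1 : Fin 3) = 2 by decide,
        show (finRotate 3) (2 : Fin 3) = 0 by decide] <;>
      nlinarith [h3]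

lemma realizes_sigma1 : Realizes sigma1 (Equiv.swap 1 2) := by
  intro i
  left
  fin_cases i <;>
  · funext j
    fin_cases j <;>
      simp [sigma1, v, Matrix.mulVec, dotProduct, Fin.sum_univ_two, Matrix.vecHead, Matrix.vecTail,
        show (Equiv.swap 1 2 : Equiv.Perm (Fin 3)) 0 = 0 by decide,
        show (Equiv.swap 1 2 : Equiv.Perm (Fin 3)) 1 = 2 by decide,
        show (Equiv.swap 1 2 : Equiv.Perm (Fin 3)) 2 = 1 by decide]

/-- every element of C3v realizes some permutation -/
lemma mem_realizes {Q : Matrix.orthogonalGroup (Fin 2) ℝ} (hQ : Q ∈ C3v) :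
    ∃ σ : Equiv.Perm (Fin 3), Realizes Q σ := by
  let H : Subgroup (Matrix.orthogonalGroup (Fin 2) ℝ) :=
    { carrier := {Q | ∃ σ, Realizes Q σ}
      one_mem' := ⟨1, realizes_one⟩
      mul_mem' := fun ⟨σ1, h1⟩ ⟨σ2, h2⟩ => ⟨σ2 * σ1, realizes_mul h1 h2⟩
      inv_mem' := fun ⟨σ, h⟩ => ⟨σ⁻¹, realizes_inv h⟩ }
  have : C3v ≤ H := by
    rw [C3v, Subgroup.closure_le]
    rintro Q (rfl | rfl)
    · exact ⟨finRotate 3, realizes_rot⟩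
    · exact ⟨Equiv.swap 1 2, realizes_sigma1⟩
  exact this hQ

/-- every permutation is realized by some element of C3v -/
lemma all_realized (σ : Equiv.Perm (Fin 3)) :
    ∃ Q ∈ C3v, Realizes Q σ := by
  have hr : rot2PiOver3 ∈ C3v := Subgroup.subset_closure (by left; rfl)
  have hs : sigma1 ∈ C3v := Subgroup.subset_closure (by right; rfl)
  have henum := (by decide : ∀ τ : Equiv.Perm (Fin 3), τ = 1 ∨ τ = finRotate 3
      ∨ τ = finRotate 3 * finRotate 3
      ∨ τ = Equiv.swap 1 2 ∨ τ = Equiv.swap 1 2 * finRotate 3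
      ∨ τ = Equiv.swap 1 2 * (finRotate 3 * finRotate 3)) σ
  rcases henum with rfl | rfl | rfl | rfl | rfl | rfl
  · exact ⟨1, one_mem _, realizes_one⟩
  · exact ⟨rot2PiOver3, hr, realizes_rot⟩
  · exact ⟨rot2PiOver3 * rot2PiOver3, mul_mem hr hr, realizes_mul realizes_rot realizes_rot⟩
  · exact ⟨sigma1, hs, realizes_sigma1⟩
  · exact ⟨rot2PiOver3 * sigma1, mul_mem hr hs, realizes_mul realizes_rot realizes_sigma1⟩
  · exact ⟨rot2PiOver3 * rot2PiOver3 * sigma1, mul_mem (mul_mem hr hr) hs,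
      realizes_mul (realizes_mul realizes_rot realizes_rot) realizes_sigma1⟩

lemma conj_quad (Q C : Matrix (Fin 2) (Fin 2) ℝ) (w : Fin 2 → ℝ) :
    w ⬝ᵥ (Q * C * Qᵀ).mulVec w = (Qᵀ.mulVec w) ⬝ᵥ C.mulVec (Qᵀ.mulVec w) := by
  simp [Matrix.mulVec, dotProduct, Matrix.mul_apply, Fin.sum_univ_two,
    Matrix.transpose_apply, Matrix.vecHead, Matrix.vecTail]
  ring

lemma quad_ext (A B : Matrix (Fin 2) (Fin 2) ℝ) (hA : Aᵀ = A) (hB : Bᵀ = B)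
    (h : ∀ i, v i ⬝ᵥ A.mulVec (v i) = v i ⬝ᵥ B.mulVec (v i)) : A = B := by
  have h3 : Real.sqrt 3 * Real.sqrt 3 = 3 := Real.mul_self_sqrt (by norm_num)
  have h3pos : (0:ℝ) < Real.sqrt 3 := Real.sqrt_pos.mpr (by norm_num)
  have hA' := congrFun (congrFun hA 0) 1
  have hB' := congrFun (congrFun hB 0) 1
  simp [Matrix.transpose_apply] at hA' hB'
  have h0 := h 0
  have h1 := h 1
  have h2 := h 2
  simp [v, Matrix.mulVec, dotProduct, Fin.sum_univ_two] at h0 h1 h2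
  have ha : A 0 0 = B 0 0 := by
    linear_combination (2/3) * h1 + (2/3) * h2 - (1/3) * h0 + ((B 0 0 - A 0 0)/3) * h3
  have hb : A 0 1 = B 0 1 := by
    refine mul_left_cancel₀ (ne_of_gt h3pos) ?_
    linear_combination h2 - h1 - (Real.sqrt 3 / 2) * hA' + (Real.sqrt 3 / 2) * hB'
  ext i j
  fin_cases i <;> fin_cases j
  · exact ha
  · exact hb
  · exact hA'.trans (hb.trans hB'.symm)
  · exact h0

/-- For real symmetric 2×2 matrices `C`, `D`: `D = Q C Qᵀ` for some `Q ∈ C3v` iff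
there is a permutation `σ` of `{1,2,3}` with `vᵢ · D vᵢ = v_{σ(i)} · C v_{σ(i)}` for
all `i`. (Completeness of the functional basis `{v1·Cv1, v2·Cv2, v3·Cv3}` with the
full permutation constraints for `C3v` scalar functions.) -/
theorem stmt_18 (C D : Matrix (Fin 2) (Fin 2) ℝ) (hC : Cᵀ = C) (hD : Dᵀ = D) :
    (∃ P ∈ C3v, D = (P : Matrix (Fin 2) (Fin 2) ℝ) * C * (P : Matrix (Fin 2) (Fin 2) ℝ)ᵀ) ↔
    ∃ σ : Equiv.Perm (Fin 3), ∀ i : Fin 3,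
      v i ⬝ᵥ D.mulVec (v i) = v (σ i) ⬝ᵥ C.mulVec (v (σ i)) := by
  constructor
  · rintro ⟨P, hP, rfl⟩
    obtain ⟨σ, hσ⟩ := mem_realizes hP
    refine ⟨σ, fun i => ?_⟩
    rw [conj_quad]
    rcases hσ i with h | h <;> rw [h] <;> simp only [Matrix.mulVec_neg, neg_dotProduct, dotProduct_neg, neg_neg]
  · rintro ⟨σ, hσ⟩
    obtain ⟨Q, hQmem, hQ⟩ := all_realized σ
    refine ⟨Q, hQmem, ?_⟩
    apply quad_ext _ _ hD
    · rw [Matrix.transpose_mul, Matrix.transpose_mul, Matrix.transpose_transpose, hC,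
        Matrix.mul_assoc]
    · intro i
      rw [conj_quad, hσ i]
      rcases hQ i with h | h <;> rw [h] <;> simp only [Matrix.mulVec_neg, neg_dotProduct, dotProduct_neg, neg_neg]
end
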